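/- With the setup of the balance criterion f, f(X_s)² = n⁻² ∑_{j=1}^p ∑_{k=1}^p q_j q_k [∑_{u=1}^{q_j} ∑_{v=1}^{q_k} n_{jk}(u,v)²] − ∑_{j=1}^p q_j − p(p−1). -/
import Mathlib


open Finset

/-- Number of rows `i` of the array with level `u` in column `j`. -/
def countJ {n p : ℕ} {q : Fin p → ℕ} (x : Fin n → (j : Fin p) → Fin (q j))
    (j : Fin p) (u : Fin (q j)) : ℕ :=
  (Finset.univ.filter (fun i : Fin n => x i j = u)).card

/-- Number of rows `i` of the array with the pair of levels `(u, v)` in columns `(j, k)`. -/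
def countJK {n p : ℕ} {q : Fin p → ℕ} (x : Fin n → (j : Fin p) → Fin (q j))
    (j k : Fin p) (u : Fin (q j)) (v : Fin (q k)) : ℕ :=
  (Finset.univ.filter (fun i : Fin n => x i j = u ∧ x i k = v)).card

/-- `δ(x_i, x_l) = ∑_j q_j · 𝟙[x_{ij} = x_{lj}]`. -/
noncomputable def delta {n p : ℕ} {q : Fin p → ℕ} (x : Fin n → (j : Fin p) → Fin (q j))
    (i l : Fin n) : ℝ :=
  ∑ j : Fin p, (q j : ℝ) * (if x i j = x l j then 1 else 0)

/-- The squared balance criterion `f(X_s)²`. -/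
noncomputable def fsq {n p : ℕ} (q : Fin p → ℕ) (x : Fin n → (j : Fin p) → Fin (q j)) : ℝ :=
  (∑ j : Fin p, ∑ u : Fin (q j),
      (q j : ℝ) ^ 2 * (1 / (q j : ℝ) - (countJ x j u : ℝ) / (n : ℝ)) ^ 2) +
    ∑ j : Fin p, ∑ k ∈ Finset.univ.filter (fun k : Fin p => k ≠ j),
      ∑ u : Fin (q j), ∑ v : Fin (q k),
        (q j : ℝ) * (q k : ℝ) *
          (1 / ((q j : ℝ) * (q k : ℝ)) - (countJK x j k u v : ℝ) / (n : ℝ)) ^ 2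

lemma sum_countJ {n p : ℕ} {q : Fin p → ℕ} (x : Fin n → (j : Fin p) → Fin (q j)) (j : Fin p) :
    ∑ u : Fin (q j), countJ x j u = n := by
  have := Finset.card_eq_sum_card_fiberwise (s := (univ : Finset (Fin n)))
    (t := (univ : Finset (Fin (q j)))) (f := fun i => x i j) (fun i _ => mem_univ _)
  simpa [countJ] using this.symm

lemma sum_countJK {n p : ℕ} {q : Fin p → ℕ} (x : Fin n → (j : Fin p) → Fin (q j))
    (j k : Fin p) (u : Fin (q j)) :
    ∑ v : Fin (q k), countJK x j k u v = countJ x j u := by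
  have := Finset.card_eq_sum_card_fiberwise (s := Finset.univ.filter (fun i : Fin n => x i j = u))
    (t := (univ : Finset (Fin (q k)))) (f := fun i => x i k) (fun i _ => mem_univ _)
  simp only [Finset.filter_filter] at this
  simpa [countJ, countJK] using this.symm

lemma countJK_diag {n p : ℕ} {q : Fin p → ℕ} (x : Fin n → (j : Fin p) → Fin (q j))
    (j : Fin p) (u v : Fin (q j)) :
    countJK x j j u v = if u = v then countJ x j u else 0 := by
  unfold countJK countJ
  split_ifs with h
  · subst h; congr 1; ext i; simp
  · convert Finset.card_empty
    ext i; simp only [mem_filter, mem_univ, true_and, Finset.notMem_empty, iff_false]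
    rintro ⟨h1, h2⟩; exact h (h1 ▸ h2 ▸ rfl)

lemma diag_alg (n : ℝ) (hn : n ≠ 0) (a : ℕ) (ha : (a:ℝ) ≠ 0) (c : Fin a → ℝ)
    (hc : ∑ u, c u = n) :
    ∑ u, (a:ℝ)^2 * (1/(a:ℝ) - c u / n)^2 = (a:ℝ)^2/n^2 * (∑ u, (c u)^2) - a := by
  have key : ∀ u : Fin a, (a:ℝ)^2 * (1/(a:ℝ) - c u / n)^2
      = 1 - 2*(a:ℝ)/n * c u + (a:ℝ)^2/n^2 * (c u)^2 := by
    intro u; field_simp; ring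
  rw [Finset.sum_congr rfl (fun u _ => key u)]
  rw [Finset.sum_add_distrib, Finset.sum_sub_distrib, Finset.sum_const, ← Finset.mul_sum,
    ← Finset.mul_sum, hc]
  simp only [Finset.card_univ, Fintype.card_fin, nsmul_eq_mul, mul_one]
  field_simp
  ring

lemma offdiag_alg (n : ℝ) (hn : n ≠ 0) (a b : ℕ) (ha : (a:ℝ) ≠ 0) (hb : (b:ℝ) ≠ 0)
    (c : Fin a → Fin b → ℝ) (hc : ∑ u, ∑ v, c u v = n) :
    ∑ u, ∑ v, (a:ℝ)*(b:ℝ) * (1/((a:ℝ)*(b:ℝ)) - c u v / n)^2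
      = (a:ℝ)*(b:ℝ)/n^2 * (∑ u, ∑ v, (c u v)^2) - 1 := by
  have key : ∀ (u : Fin a) (v : Fin b), (a:ℝ)*(b:ℝ) * (1/((a:ℝ)*(b:ℝ)) - c u v / n)^2
      = 1/((a:ℝ)*(b:ℝ)) - 2/n * c u v + (a:ℝ)*(b:ℝ)/n^2 * (c u v)^2 := by
    intro u v; field_simp; ring
  rw [Finset.sum_congr rfl (fun u _ => Finset.sum_congr rfl (fun v _ => key u v))]
  simp only [Finset.sum_add_distrib, Finset.sum_sub_distrib, Finset.sum_const,
    ← Finset.mul_sum, Finset.card_univ, Fintype.card_fin, nsmul_eq_mul]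
  rw [hc]
  field_simp
  ring

/-- `f(X_s)² = n⁻² ∑_j ∑_k q_j q_k [∑_{u,v} n_{jk}(u,v)²] − ∑_j q_j − p(p−1)`. -/
theorem stmt_12 {n p : ℕ} (hn : 0 < n) (q : Fin p → ℕ) (hq : ∀ j, 0 < q j)
    (x : Fin n → (j : Fin p) → Fin (q j)) :
    fsq q x =
      (1 / (n : ℝ) ^ 2) *
          (∑ j : Fin p, ∑ k : Fin p, (q j : ℝ) * (q k : ℝ) *
            (∑ u : Fin (q j), ∑ v : Fin (q k), (countJK x j k u v : ℝ) ^ 2)) -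
        (∑ j : Fin p, (q j : ℝ)) - (p : ℝ) * ((p : ℝ) - 1) := by
  have hn' : (n:ℝ) ≠ 0 := Nat.cast_ne_zero.mpr hn.ne'
  have hq' : ∀ j, (q j:ℝ) ≠ 0 := fun j => Nat.cast_ne_zero.mpr (hq j).ne'
  have hsumJ : ∀ j, ∑ u : Fin (q j), (countJ x j u : ℝ) = (n:ℝ) := by
    intro j; exact_mod_cast congrArg (Nat.cast : ℕ → ℝ) (sum_countJ x j)
  have htot : ∀ j k, ∑ u : Fin (q j), ∑ v : Fin (q k), (countJK x j k u v : ℝ) = (n:ℝ) := by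
    intro j k
    have : ∑ u : Fin (q j), ∑ v : Fin (q k), countJK x j k u v = n := by
      simp [sum_countJK, sum_countJ]
    exact_mod_cast congrArg (Nat.cast : ℕ → ℝ) this
  set F : Fin p → Fin p → ℝ := fun j k =>
    (q j:ℝ) * (q k:ℝ) * (∑ u : Fin (q j), ∑ v : Fin (q k), (countJK x j k u v : ℝ)^2) with hF
  have h1 : ∀ j, ∑ u : Fin (q j),
      (q j : ℝ) ^ 2 * (1 / (q j : ℝ) - (countJ x j u : ℝ) / (n : ℝ)) ^ 2
      = F j j / (n:ℝ)^2 - q j := by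
    intro j
    rw [diag_alg (n:ℝ) hn' (q j) (hq' j) _ (hsumJ j)]
    have hA : ∑ u : Fin (q j), ∑ v : Fin (q j), (countJK x j j u v : ℝ)^2
        = ∑ u : Fin (q j), (countJ x j u : ℝ)^2 := by
      refine Finset.sum_congr rfl fun u _ => ?_
      simp [countJK_diag, apply_ite (fun t : ℕ => ((t:ℝ))^2), Finset.sum_ite_eq]
    rw [hF]
    simp only []
    rw [hA]
    ring
  have h2 : ∀ j k, ∑ u : Fin (q j), ∑ v : Fin (q k),
      (q j : ℝ) * (q k : ℝ) *
        (1 / ((q j : ℝ) * (q k : ℝ)) - (countJK x j k u v : ℝ) / (n : ℝ)) ^ 2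
      = F j k / (n:ℝ)^2 - 1 := by
    intro j k
    rw [offdiag_alg (n:ℝ) hn' (q j) (q k) (hq' j) (hq' k) _ (htot j k)]
    rw [hF]; ring
  rw [fsq]
  rw [Finset.sum_congr rfl (fun j _ => h1 j),
      Finset.sum_congr rfl (fun j _ => Finset.sum_congr rfl (fun k _ => h2 j k))]
  have hsplit : (∑ j : Fin p, ∑ k : Fin p, F j k)
      = ∑ j : Fin p, (F j j + ∑ k ∈ univ.erase j, F j k) :=
    Finset.sum_congr rfl fun j _ => (Finset.add_sum_erase _ _ (mem_univ j)).symm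
  rw [hsplit]
  simp only [Finset.filter_ne', Finset.sum_sub_distrib, Finset.sum_add_distrib,
    Finset.sum_const, Finset.card_erase_of_mem (mem_univ _),
    Finset.card_univ, Fintype.card_fin, nsmul_eq_mul, mul_one]
  simp only [← Finset.sum_div]
  have hcount : (p:ℝ) * ((p - 1 : ℕ) : ℝ) = (p:ℝ) * ((p:ℝ) - 1) := by
    rcases Nat.eq_zero_or_pos p with h | h
    · subst h; simp
    · rw [Nat.cast_sub h]; push_cast; ring
  rw [hcount]
  field_simp
  ring
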